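/- Let A, B, C ∈ ℂ^{r×r}, let B and C commute, let s be a non-negative integer, and suppose C + nI is invertible for all integers n ≥ 0 and C − kI is invertible for all integers 1 ≤ k ≤ s; let |x| < 1. Then ₂F₁(A, B; C−sI; x) = ₂F₁(A, B; C; x) + x·A·∑_{k=1}^{s} [₂F₁(A+I, B+I; C+(2−k)I; x)]·B·(C−kI)⁻¹·(C−(k−1)I)⁻¹. -/

import Mathlib

/-!
For `s = 1` this is the contiguous relation
`₂F₁(A, B; C - I; x) = ₂F₁(A, B; C; x) + x A ₂F₁(A + I, B + I; C + I; x) B (C - I)⁻¹ C⁻¹`,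
and the general case follows by induction on `s`, applying it to `C - sI`.

Termwise, `(C - I)_n⁻¹ = (C)_n⁻¹ (I + n (C - I)⁻¹)` splits the left-hand series into
`₂F₁(A, B; C; x)` and `∑ n (n-th term) (C - I)⁻¹`. Since `(A)_{n+1} = A (A + I)_n` and `B` commutes
with `C`, the `(n+1)`-st summand of the latter is `x A` times the `n`-th term of
`₂F₁(A + I, B + I; C + I; x)` times `B C⁻¹ (C - I)⁻¹`.

All series converge for `|x| < 1`: in the operator norm the `n`-th term is bounded by
`∏_{k<n} |x| (‖A‖ + k) (‖B‖ + k) ‖(C + kI)⁻¹‖ / (k + 1)`, and since `‖(C + kI)⁻¹‖ ≤ 1 / (k - ‖C‖)`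
for large `k`, the factors are eventually below any `q > |x|`, so the ratio test applies.
-/

/-- The shifted factorial (Pochhammer) matrix: `(A)_0 = I`, `(A)_{n+1} = (A)_n (A + nI)`. -/
noncomputable def mPoch {r : ℕ} (A : Matrix (Fin r) (Fin r) ℂ) : ℕ → Matrix (Fin r) (Fin r) ℂ
  | 0 => 1
  | n + 1 => mPoch A n * (A + (n : ℂ) • 1)

/-- The Gauss hypergeometric matrix function `₂F₁(A, B; C; x)`. -/
noncomputable def hypF21 {r : ℕ} (A B C : Matrix (Fin r) (Fin r) ℂ) (x : ℂ) :
    Matrix (Fin r) (Fin r) ℂ :=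
  ∑' n : ℕ, ((n.factorial : ℂ)⁻¹ * x ^ n) • (mPoch A n * mPoch B n * (mPoch C n)⁻¹)

open Filter Finset Topology

theorem Commute.ringInverse_right {M₀ : Type*} [MonoidWithZero M₀] {a b : M₀}
    (h : Commute a b) : Commute a (Ring.inverse b) := by
  by_cases hb : IsUnit b
  · lift b to M₀ˣ using hb
    rw [Ring.inverse_unit]
    exact h.units_inv_right
  · rw [Ring.inverse_non_unit _ hb]
    exact Commute.zero_right a

theorem Commute.matrix_inv_right {n α : Type*} [Fintype n] [DecidableEq n] [CommRing α]
    {X M : Matrix n n α} (h : Commute X M) : Commute X M⁻¹ := by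
  rw [Matrix.nonsing_inv_eq_ringInverse]
  exact h.ringInverse_right

theorem norm_ringInverse_add_smul_one_le {𝕜 R : Type*} [NormedField 𝕜] [NormedRing R]
    [NormedAlgebra 𝕜 R] [HasSummableGeomSeries R] (h1 : ‖(1 : R)‖ ≤ 1) {C : R} {c : 𝕜}
    (hc : ‖C‖ < ‖c‖) : ‖Ring.inverse (C + c • 1)‖ ≤ (‖c‖ - ‖C‖)⁻¹ := by
  have hc_pos : 0 < ‖c‖ := (norm_nonneg C).trans_lt hc
  have hc0 : c ≠ 0 := norm_pos_iff.mp hc_pos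
  set t : R := -(c⁻¹ • C)
  have ht : ‖t‖ = ‖C‖ / ‖c‖ := by
    rw [norm_neg, norm_smul, norm_inv, inv_mul_eq_div]
  have ht1 : ‖t‖ < 1 := by
    rwa [ht, div_lt_one hc_pos]
  have hu : IsUnit (1 - t) := isUnit_one_sub_of_norm_lt_one ht1
  have hcu : IsUnit (c • (1 - t)) := by
    rw [Algebra.smul_def]
    exact ((Ne.isUnit hc0).map _).mul hu
  have hinv : Ring.inverse (C + c • 1) = c⁻¹ • Ring.inverse (1 - t) := by
    have hfactor : C + c • 1 = c • (1 - t) := by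
      rw [smul_sub, smul_neg, sub_neg_eq_add, smul_inv_smul₀ hc0, add_comm]
    rw [hfactor, ← mul_one (Ring.inverse _), Ring.inverse_mul_eq_iff_eq_mul _ _ _ hcu,
      smul_mul_smul_comm, mul_inv_cancel₀ hc0, one_smul, Ring.mul_inverse_cancel _ hu]
  have hgeom : ‖Ring.inverse (1 - t)‖ ≤ (1 - ‖t‖)⁻¹ := by
    rw [← geom_series_eq_inverse t ht1]
    exact (tsum_geometric_le_of_norm_lt_one t ht1).trans (by linarith)
  calc ‖Ring.inverse (C + c • 1)‖ ≤ ‖c‖⁻¹ * (1 - ‖t‖)⁻¹ := by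
        rw [hinv, norm_smul, norm_inv]
        gcongr
    _ = (‖c‖ - ‖C‖)⁻¹ := by
        rw [ht, ← mul_inv, mul_sub, mul_one, mul_div_cancel₀ _ hc_pos.ne']

theorem summable_prod_range_of_eventually_le {ρ : ℕ → ℝ} {q : ℝ} (hρ : ∀ k, 0 ≤ ρ k)
    (hq : q < 1) (h : ∀ᶠ k in atTop, ρ k ≤ q) : Summable fun n => ∏ k ∈ range n, ρ k := by
  refine summable_of_ratio_norm_eventually_le hq (h.mono fun k hk => ?_)
  rw [prod_range_succ, norm_mul, Real.norm_of_nonneg (hρ k), mul_comm]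
  exact mul_le_mul_of_nonneg_right hk (norm_nonneg _)

theorem tendsto_natCast_add_div_add_atTop (a b : ℝ) :
    Tendsto (fun k : ℕ => ((k : ℝ) + a) / (k + b)) atTop (𝓝 1) := by
  have hb : Tendsto (fun k : ℕ => (k : ℝ) + b) atTop atTop :=
    tendsto_atTop_add_const_right _ b tendsto_natCast_atTop_atTop
  have h := (hb.const_div_atTop (a - b)).const_add 1
  rw [add_zero] at h
  refine h.congr' ?_
  filter_upwards [hb.eventually_gt_atTop 0] with k hk
  field_simp
  ring

section Matrix

variable {r : ℕ}

local notation "𝕄" => Matrix (Fin r) (Fin r) ℂ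

theorem mPoch_succ (A : 𝕄) (n : ℕ) : mPoch A (n + 1) = mPoch A n * (A + (n : ℂ) • 1) := rfl

theorem mPoch_succ' (A : 𝕄) (n : ℕ) : mPoch A (n + 1) = A * mPoch (A + 1) n := by
  induction n with
  | zero => simp [mPoch]
  | succ n ih =>
    rw [mPoch_succ, ih, mPoch_succ, mul_assoc]
    congr 2
    push_cast
    module

theorem Commute.mPoch_right {X A : 𝕄} (h : Commute X A) (n : ℕ) : Commute X (mPoch A n) := by
  induction n with
  | zero => exact Commute.one_right X
  | succ n ih => exact ih.mul_right (h.add_right ((Commute.one_right X).smul_right _))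

theorem isUnit_mPoch {C : 𝕄} (hC : ∀ n : ℕ, IsUnit (C + (n : ℂ) • 1)) (n : ℕ) :
    IsUnit (mPoch C n) := by
  induction n with
  | zero => exact isUnit_one
  | succ n ih => exact ih.mul (hC n)

theorem inv_mPoch_sub_one {C : 𝕄} {n : ℕ} (hC1 : IsUnit (C - 1)) (hP : IsUnit (mPoch C n)) :
    (mPoch (C - 1) n)⁻¹ = (mPoch C n)⁻¹ + (n : ℂ) • ((mPoch C n)⁻¹ * (C - 1)⁻¹) := by
  have hE : (C - 1) * (C - 1)⁻¹ = 1 :=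
    Matrix.mul_nonsing_inv _ ((Matrix.isUnit_iff_isUnit_det _).mp hC1)
  have hP' : mPoch C n * (mPoch C n)⁻¹ = 1 :=
    Matrix.mul_nonsing_inv _ ((Matrix.isUnit_iff_isUnit_det _).mp hP)
  have hrec : mPoch (C - 1) n * (C - 1 + (n : ℂ) • 1) = (C - 1) * mPoch C n := by
    rw [← mPoch_succ, mPoch_succ', sub_add_cancel]
  have hcomm : Commute (mPoch C n)⁻¹ (C - 1 + (n : ℂ) • 1) := by
    have hC : Commute (C - 1 + (n : ℂ) • 1) C :=
      ((Commute.refl C).sub_left (Commute.one_left C)).add_left ((Commute.one_left C).smul_left _)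
    exact (hC.mPoch_right n).matrix_inv_right.symm
  have hsplit : (mPoch C n)⁻¹ + (n : ℂ) • ((mPoch C n)⁻¹ * (C - 1)⁻¹) =
      (C - 1 + (n : ℂ) • 1) * (mPoch C n)⁻¹ * (C - 1)⁻¹ := by
    rw [← hcomm.eq, mul_assoc, add_mul, hE, smul_mul_assoc, one_mul, mul_add, mul_one,
      mul_smul_comm]
  apply Matrix.inv_eq_right_inv
  rw [hsplit, ← mul_assoc, ← mul_assoc, hrec, mul_assoc (C - 1), hP', mul_one, hE]

noncomputable def hypF21Term (A B C : 𝕄) (x : ℂ) (n : ℕ) : 𝕄 :=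
  ((n.factorial : ℂ)⁻¹ * x ^ n) • (mPoch A n * mPoch B n * (mPoch C n)⁻¹)

theorem hypF21_eq_tsum (A B C : 𝕄) (x : ℂ) : hypF21 A B C x = ∑' n, hypF21Term A B C x n := rfl

theorem hypF21Term_sub_one (A B : 𝕄) {C : 𝕄} (x : ℂ) {n : ℕ} (hC1 : IsUnit (C - 1))
    (hP : IsUnit (mPoch C n)) :
    hypF21Term A B (C - 1) x n =
      hypF21Term A B C x n + (n : ℂ) • (hypF21Term A B C x n * (C - 1)⁻¹) := by
  rw [hypF21Term, hypF21Term, inv_mPoch_sub_one hC1 hP, mul_add, smul_add, mul_smul_comm,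
    smul_mul_assoc, smul_comm, mul_assoc (mPoch A n * mPoch B n)]

theorem succ_smul_hypF21Term_succ (A : 𝕄) {B C : 𝕄} (x : ℂ) (n : ℕ) (hBC : Commute B C) :
    ((n : ℂ) + 1) • hypF21Term A B C x (n + 1) =
      x • (A * hypF21Term (A + 1) (B + 1) (C + 1) x n * B * C⁻¹) := by
  have hscalar : ((n : ℂ) + 1) * (((n + 1).factorial : ℂ)⁻¹ * x ^ (n + 1)) =
      x * ((n.factorial : ℂ)⁻¹ * x ^ n) := by
    rw [Nat.factorial_succ]
    push_cast
    field_simp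
    ring
  have hB : Commute B (mPoch (B + 1) n) :=
    ((Commute.refl B).add_right (Commute.one_right B)).mPoch_right n
  have hC : Commute B (mPoch (C + 1) n)⁻¹ :=
    (hBC.add_right (Commute.one_right B)).mPoch_right n |>.matrix_inv_right
  have hmat : A * mPoch (A + 1) n * (B * mPoch (B + 1) n) * ((mPoch (C + 1) n)⁻¹ * C⁻¹) =
      A * (mPoch (A + 1) n * mPoch (B + 1) n * (mPoch (C + 1) n)⁻¹) * B * C⁻¹ := by
    simp only [mul_assoc]
    rw [← mul_assoc B, hB.eq, mul_assoc, ← mul_assoc B, hC.eq, mul_assoc]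
  rw [hypF21Term, hypF21Term, mPoch_succ', mPoch_succ', mPoch_succ', Matrix.mul_inv_rev, hmat,
    smul_smul, hscalar, ← smul_smul, mul_smul_comm, smul_mul_assoc, smul_mul_assoc]

section Norm

attribute [local instance] Matrix.linftyOpNormedRing Matrix.linftyOpNormedAlgebra

theorem Matrix.linfty_opNorm_one_le {n α : Type*} [Fintype n] [DecidableEq n] [NormedRing α]
    [NormOneClass α] : ‖(1 : Matrix n n α)‖ ≤ 1 := by
  rw [← Matrix.diagonal_one, Matrix.linfty_opNorm_diagonal]
  exact (pi_norm_le_iff_of_nonneg zero_le_one).mpr fun _ => norm_one.le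

theorem norm_mPoch_le (A : 𝕄) (n : ℕ) : ‖mPoch A n‖ ≤ ∏ k ∈ range n, (‖A‖ + k) := by
  induction n with
  | zero => exact Matrix.linfty_opNorm_one_le
  | succ n ih =>
    rw [mPoch_succ, prod_range_succ]
    refine (norm_mul_le _ _).trans (mul_le_mul ih ?_ (norm_nonneg _) (by positivity))
    refine (norm_add_le _ _).trans (add_le_add_right ?_ _)
    rw [norm_smul, Complex.norm_natCast]
    exact mul_le_of_le_one_right (Nat.cast_nonneg n) Matrix.linfty_opNorm_one_le

-- No invertibility is needed: a singular matrix has inverse `0`, and `(M N)⁻¹ = N⁻¹ M⁻¹` always.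
theorem norm_inv_mPoch_le (C : 𝕄) (n : ℕ) :
    ‖(mPoch C n)⁻¹‖ ≤ ∏ k ∈ range n, ‖(C + (k : ℂ) • 1)⁻¹‖ := by
  induction n with
  | zero => simpa [mPoch] using Matrix.linfty_opNorm_one_le
  | succ n ih =>
    rw [mPoch_succ, Matrix.mul_inv_rev, prod_range_succ, mul_comm (∏ k ∈ range n, _)]
    exact (norm_mul_le _ _).trans (mul_le_mul_of_nonneg_left ih (norm_nonneg _))

theorem norm_inv_add_smul_one_le {C : 𝕄} {k : ℕ} (hk : ‖C‖ < k) :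
    ‖(C + (k : ℂ) • 1)⁻¹‖ ≤ ((k : ℝ) - ‖C‖)⁻¹ := by
  rw [Matrix.nonsing_inv_eq_ringInverse]
  simpa using norm_ringInverse_add_smul_one_le Matrix.linfty_opNorm_one_le
    (by rwa [Complex.norm_natCast] : ‖C‖ < ‖(k : ℂ)‖)

theorem norm_hypF21Term_le (A B C : 𝕄) (x : ℂ) (n : ℕ) :
    ‖hypF21Term A B C x n‖ ≤
      ∏ k ∈ range n, ‖x‖ * (‖A‖ + k) * (‖B‖ + k) * ‖(C + (k : ℂ) • 1)⁻¹‖ / (k + 1) := by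
  have hmat : ‖mPoch A n * mPoch B n * (mPoch C n)⁻¹‖ ≤
      (∏ k ∈ range n, (‖A‖ + k)) * (∏ k ∈ range n, (‖B‖ + k)) *
        ∏ k ∈ range n, ‖(C + (k : ℂ) • 1)⁻¹‖ := by
    refine norm_mul₃_le.trans ?_
    gcongr
    exacts [norm_mPoch_le A n, norm_mPoch_le B n, norm_inv_mPoch_le C n]
  have hfact : ∏ k ∈ range n, ((k : ℝ) + 1) = n.factorial := by
    exact_mod_cast prod_range_add_one_eq_factorial n
  rw [hypF21Term, norm_smul, norm_mul, norm_inv, norm_pow, Complex.norm_natCast, prod_div_distrib,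
    prod_mul_distrib, prod_mul_distrib, prod_mul_distrib, prod_const, card_range, hfact]
  calc (n.factorial : ℝ)⁻¹ * ‖x‖ ^ n * ‖mPoch A n * mPoch B n * (mPoch C n)⁻¹‖
      ≤ (n.factorial : ℝ)⁻¹ * ‖x‖ ^ n * ((∏ k ∈ range n, (‖A‖ + k)) *
          (∏ k ∈ range n, (‖B‖ + k)) * ∏ k ∈ range n, ‖(C + (k : ℂ) • 1)⁻¹‖) := by
        gcongr
    _ = _ := by ring

theorem eventually_hypF21_ratio_le (A B C : 𝕄) {x : ℂ} {q : ℝ} (hq : ‖x‖ < q) :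
    ∀ᶠ k : ℕ in atTop, ‖x‖ * (‖A‖ + k) * (‖B‖ + k) * ‖(C + (k : ℂ) • 1)⁻¹‖ / (k + 1) ≤ q := by
  have hlim : Tendsto (fun k : ℕ => ‖x‖ * (((k : ℝ) + ‖A‖) / (k + 1)) *
      (((k : ℝ) + ‖B‖) / (k + -‖C‖))) atTop (𝓝 ‖x‖) := by
    simpa using (tendsto_const_nhds.mul (tendsto_natCast_add_div_add_atTop ‖A‖ 1)).mul
      (tendsto_natCast_add_div_add_atTop ‖B‖ (-‖C‖))
  filter_upwards [hlim.eventually_lt_const hq, eventually_gt_atTop ⌈‖C‖⌉₊] with k hk hkC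
  have hkC : ‖C‖ < k := Nat.lt_of_ceil_lt hkC
  refine le_trans ?_ hk.le
  calc ‖x‖ * (‖A‖ + k) * (‖B‖ + k) * ‖(C + (k : ℂ) • 1)⁻¹‖ / (k + 1)
      ≤ ‖x‖ * (‖A‖ + k) * (‖B‖ + k) * ((k : ℝ) - ‖C‖)⁻¹ / (k + 1) := by
        gcongr
        exact norm_inv_add_smul_one_le hkC
    _ = _ := by
        have : (k : ℝ) - ‖C‖ ≠ 0 := by linarith
        rw [← sub_eq_add_neg]
        field_simp
        ring

theorem summable_hypF21Term (A B C : 𝕄) {x : ℂ} (hx : ‖x‖ < 1) :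
    Summable (hypF21Term A B C x) := by
  refine Summable.of_norm_bounded ?_ (norm_hypF21Term_le A B C x)
  obtain ⟨q, hxq, hq1⟩ := exists_between hx
  exact summable_prod_range_of_eventually_le (fun k => by positivity) hq1
    (eventually_hypF21_ratio_le A B C hxq)

end Norm

theorem hypF21_sub_one (A : 𝕄) {B C : 𝕄} {x : ℂ} (hBC : Commute B C)
    (hC : ∀ n : ℕ, IsUnit (C + (n : ℂ) • 1)) (hC1 : IsUnit (C - 1)) (hx : ‖x‖ < 1) :
    hypF21 A B (C - 1) x = hypF21 A B C x +
      x • (A * (hypF21 (A + 1) (B + 1) (C + 1) x * B * (C - 1)⁻¹ * C⁻¹)) := by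
  have hF := (summable_hypF21Term A B C hx).hasSum
  have hF' := (summable_hypF21Term (A + 1) (B + 1) (C + 1) hx).hasSum
  have hG : HasSum (fun n : ℕ => (n : ℂ) • (hypF21Term A B C x n * (C - 1)⁻¹))
      (x • (A * (hypF21 (A + 1) (B + 1) (C + 1) x * B * (C - 1)⁻¹ * C⁻¹))) := by
    have hinv : C⁻¹ * (C - 1)⁻¹ = (C - 1)⁻¹ * C⁻¹ :=
      ((Commute.refl C).sub_right (Commute.one_right C)).matrix_inv_right.symm.matrix_inv_right
        |>.eq.symm
    have hterm (n : ℕ) : ((n : ℂ) + 1) • (hypF21Term A B C x (n + 1) * (C - 1)⁻¹) =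
        x • (A * hypF21Term (A + 1) (B + 1) (C + 1) x n * B * C⁻¹) * (C - 1)⁻¹ := by
      rw [← smul_mul_assoc, succ_smul_hypF21Term_succ A x n hBC]
    have hval : x • (A * (hypF21 (A + 1) (B + 1) (C + 1) x * B * (C - 1)⁻¹ * C⁻¹)) =
        x • (A * hypF21 (A + 1) (B + 1) (C + 1) x * B * C⁻¹) * (C - 1)⁻¹ := by
      rw [smul_mul_assoc]
      simp only [mul_assoc, hinv]
    rw [← hasSum_nat_add_iff' 1]
    simp only [range_one, sum_singleton, Nat.cast_zero, zero_smul, sub_zero, Nat.cast_succ, hterm,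
      hval]
    exact ((((hF'.mul_left A).mul_right B).mul_right C⁻¹).const_smul x).mul_right (C - 1)⁻¹
  have hsplit : hypF21Term A B (C - 1) x =
      fun n => hypF21Term A B C x n + (n : ℂ) • (hypF21Term A B C x n * (C - 1)⁻¹) :=
    funext fun n => hypF21Term_sub_one A B x hC1 (isUnit_mPoch hC n)
  rw [hypF21_eq_tsum, hsplit]
  exact (hF.add hG).tsum_eq

theorem isUnit_sub_smul_add_smul {C : 𝕄} {s : ℕ} (hC : ∀ n : ℕ, IsUnit (C + (n : ℂ) • 1))
    (hCs : ∀ k : ℕ, 1 ≤ k → k ≤ s → IsUnit (C - (k : ℂ) • 1)) (n : ℕ) :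
    IsUnit (C - (s : ℂ) • 1 + (n : ℂ) • 1) := by
  rcases le_or_gt s n with hsn | hns
  · have h : C - (s : ℂ) • 1 + (n : ℂ) • 1 = C + ((n - s : ℕ) : ℂ) • 1 := by
      rw [Nat.cast_sub hsn]
      module
    exact h ▸ hC (n - s)
  · have h : C - (s : ℂ) • 1 + (n : ℂ) • 1 = C - ((s - n : ℕ) : ℂ) • 1 := by
      rw [Nat.cast_sub hns.le]
      module
    exact h ▸ hCs (s - n) (by omega) (by omega)

end Matrix

theorem hypF21_recursion_C {r : ℕ} (A B C : Matrix (Fin r) (Fin r) ℂ) (x : ℂ) (s : ℕ)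
    (hBC : B * C = C * B)
    (hC : ∀ n : ℕ, IsUnit (C + (n : ℂ) • (1 : Matrix (Fin r) (Fin r) ℂ)))
    (hCs : ∀ k : ℕ, 1 ≤ k → k ≤ s → IsUnit (C - (k : ℂ) • (1 : Matrix (Fin r) (Fin r) ℂ)))
    (hx : ‖x‖ < 1) :
    hypF21 A B (C - (s : ℂ) • 1) x =
      hypF21 A B C x +
        x • (A * ∑ k ∈ Finset.Icc 1 s,
          hypF21 (A + 1) (B + 1) (C + ((2 : ℂ) - (k : ℂ)) • 1) x * B *
            (C - (k : ℂ) • 1)⁻¹ * (C - ((k : ℂ) - 1) • 1)⁻¹) := by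
  induction s with
  | zero => simp
  | succ s ih =>
    have hBCs : Commute B (C - (s : ℂ) • 1) :=
      Commute.sub_right hBC ((Commute.one_right B).smul_right _)
    have e1 : C - ((s + 1 : ℕ) : ℂ) • 1 = C - (s : ℂ) • 1 - 1 := by push_cast; module
    have hstep := hypF21_sub_one A hBCs
      (isUnit_sub_smul_add_smul hC fun k hk hks => hCs k hk (by omega))
      (e1 ▸ hCs (s + 1) le_add_self le_rfl) hx
    have e2 : C + ((2 : ℂ) - ((s + 1 : ℕ) : ℂ)) • 1 = C - (s : ℂ) • 1 + 1 := by
      push_cast; module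
    have e3 : C - (((s + 1 : ℕ) : ℂ) - 1) • 1 = C - (s : ℂ) • 1 := by push_cast; module
    rw [sum_Icc_succ_top (by omega), e1, e2, e3, hstep, ih fun k hk hks => hCs k hk (by omega),
      mul_add, smul_add, add_assoc]
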